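/- Let m be a Borel measure on ℝ that is finite on compact sets, and let q be the associated function. Then for every y ∈ ℝ and every a ≥ 0, one has ∫_ℝ (a − |u − y|)⁺ m(du) = q(y, y−a) + q(y, y+a), where (·)⁺ denotes the positive part. -/

import Mathlib

open MeasureTheory

/-- Signed measure of the open interval between `y` and `u`:
`m((y,u))` for `u ≥ y` and `-m((u,y))` for `u < y`. -/
noncomputable def signedIoo (m : Measure ℝ) (y u : ℝ) : ℝ :=
  if y ≤ u then (m (Set.Ioo y u)).toReal else -(m (Set.Ioo u y)).toReal

/-- The function `q(y,x) = (1/2) m({y}) |x−y| + ∫_y^x m((y,u)) du`. -/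
noncomputable def qFun (m : Measure ℝ) (y x : ℝ) : ℝ :=
  (1 / 2) * (m {y}).toReal * |x - y| + ∫ u in y..x, signedIoo m y u

/-!
Split `ℝ` at `y` into `(-∞, y)`, `{y}` and `(y, ∞)`. The atom contributes `a m({y})`, shared
equally by the two `q` terms. On `(y, ∞)` the integrand is `(y + a - v)⁺`, and Tonelli on the
region `{y < v < u ≤ y + a}` turns `∫_y^{y+a} m((y,u)) du` into `∫_{(y,∞)} (y + a - v)⁺ m(dv)`;
the half-line `(-∞, y)` is symmetric.
-/

open Set

theorem lintegral_measure_Ioo_left (m : Measure ℝ) [SFinite m] (c d : ℝ) :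
    ∫⁻ u in Ioc c d, m (Ioo c u) = ∫⁻ v in Ioi c, ENNReal.ofReal (d - v) ∂m := by
  have hS : MeasurableSet {p : ℝ × ℝ | c < p.2 ∧ p.2 < p.1} := by measurability
  calc ∫⁻ u in Ioc c d, m (Ioo c u)
      = (volume.restrict (Ioc c d)).prod m {p : ℝ × ℝ | c < p.2 ∧ p.2 < p.1} :=
        (Measure.prod_apply hS).symm
    _ = ∫⁻ v, (Ioi c).indicator (fun v ↦ ENNReal.ofReal (d - v)) v ∂m := by
        rw [Measure.prod_apply_symm hS]
        refine lintegral_congr fun v ↦ ?_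
        by_cases hv : c < v
        · have : (fun u ↦ (u, v)) ⁻¹' {p : ℝ × ℝ | c < p.2 ∧ p.2 < p.1} = Ioi v := by
            ext; simp [hv]
          rw [this, indicator_of_mem (mem_Ioi.2 hv), Measure.restrict_apply measurableSet_Ioi,
            inter_comm, Ioc_inter_Ioi, max_eq_right hv.le, Real.volume_Ioc]
        · simp [hv]
    _ = ∫⁻ v in Ioi c, ENNReal.ofReal (d - v) ∂m := lintegral_indicator measurableSet_Ioi _

theorem lintegral_measure_Ioo_right (m : Measure ℝ) [SFinite m] (c d : ℝ) :
    ∫⁻ u in Ioc c d, m (Ioo u d) = ∫⁻ v in Iio d, ENNReal.ofReal (v - c) ∂m := by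
  have hS : MeasurableSet {p : ℝ × ℝ | p.1 < p.2 ∧ p.2 < d} := by measurability
  calc ∫⁻ u in Ioc c d, m (Ioo u d)
      = (volume.restrict (Ioc c d)).prod m {p : ℝ × ℝ | p.1 < p.2 ∧ p.2 < d} :=
        (Measure.prod_apply hS).symm
    _ = ∫⁻ v, (Iio d).indicator (fun v ↦ ENNReal.ofReal (v - c)) v ∂m := by
        rw [Measure.prod_apply_symm hS]
        refine lintegral_congr fun v ↦ ?_
        by_cases hv : v < d
        · have : (fun u ↦ (u, v)) ⁻¹' {p : ℝ × ℝ | p.1 < p.2 ∧ p.2 < d} = Iio v := by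
            ext; simp [hv]
          have hinter : Iio v ∩ Ioc c d = Ioo c v := by
            ext u
            simp only [mem_inter_iff, mem_Iio, mem_Ioc, mem_Ioo]
            grind
          rw [this, indicator_of_mem (mem_Iio.2 hv), Measure.restrict_apply measurableSet_Iio,
            hinter, Real.volume_Ioo]
        · simp [hv]
    _ = ∫⁻ v in Iio d, ENNReal.ofReal (v - c) ∂m := lintegral_indicator measurableSet_Iio _

theorem integral_max_zero_eq_toReal_lintegral {α : Type*} [MeasurableSpace α] {μ : Measure α}
    {f : α → ℝ} (hf : AEMeasurable f μ) :
    ∫ x, max (f x) 0 ∂μ = (∫⁻ x, ENNReal.ofReal (f x) ∂μ).toReal := by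
  simp_rw [← ENNReal.toReal_ofReal']
  exact integral_toReal hf.ennreal_ofReal (.of_forall fun _ ↦ ENNReal.ofReal_lt_top)

theorem intervalIntegral_measure_Ioo_left (m : Measure ℝ) [IsLocallyFiniteMeasure m] {c d : ℝ}
    (hcd : c ≤ d) : ∫ u in c..d, (m (Ioo c u)).toReal = ∫ v in Ioi c, max (d - v) 0 ∂m := by
  have hmono : Monotone fun u ↦ m (Ioo c u) := fun _ _ h ↦ measure_mono (Ioo_subset_Ioo_right h)
  rw [intervalIntegral.integral_of_le hcd, integral_max_zero_eq_toReal_lintegral (by fun_prop),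
    ← lintegral_measure_Ioo_left,
    integral_toReal hmono.measurable.aemeasurable (.of_forall fun _ ↦ measure_Ioo_lt_top)]

theorem intervalIntegral_measure_Ioo_right (m : Measure ℝ) [IsLocallyFiniteMeasure m] {c d : ℝ}
    (hcd : c ≤ d) : ∫ u in c..d, (m (Ioo u d)).toReal = ∫ v in Iio d, max (v - c) 0 ∂m := by
  have hanti : Antitone fun u ↦ m (Ioo u d) := fun _ _ h ↦ measure_mono (Ioo_subset_Ioo_left h)
  rw [intervalIntegral.integral_of_le hcd, integral_max_zero_eq_toReal_lintegral (by fun_prop),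
    ← lintegral_measure_Ioo_right,
    integral_toReal hanti.measurable.aemeasurable (.of_forall fun _ ↦ measure_Ioo_lt_top)]

theorem signedIoo_of_le {m : Measure ℝ} {y u : ℝ} (h : y ≤ u) :
    signedIoo m y u = (m (Ioo y u)).toReal :=
  if_pos h

theorem signedIoo_of_ge {m : Measure ℝ} {y u : ℝ} (h : u ≤ y) :
    signedIoo m y u = -(m (Ioo u y)).toReal := by
  rcases h.lt_or_eq with h | rfl
  · exact if_neg h.not_ge
  · simp [signedIoo]

theorem qFun_of_le (m : Measure ℝ) {y x : ℝ} (h : y ≤ x) :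
    qFun m y x = 1 / 2 * (m {y}).toReal * (x - y) + ∫ u in y..x, (m (Ioo y u)).toReal := by
  rw [qFun, abs_of_nonneg (sub_nonneg.2 h)]
  congr 1
  refine intervalIntegral.integral_congr fun u hu ↦ signedIoo_of_le ?_
  exact (uIcc_of_le h ▸ hu).1

theorem qFun_of_ge (m : Measure ℝ) {y x : ℝ} (h : x ≤ y) :
    qFun m y x = 1 / 2 * (m {y}).toReal * (y - x) + ∫ u in x..y, (m (Ioo u y)).toReal := by
  rw [qFun, abs_of_nonpos (sub_nonpos.2 h), neg_sub, intervalIntegral.integral_symm,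
    ← intervalIntegral.integral_neg]
  congr 1
  refine intervalIntegral.integral_congr fun u hu ↦ ?_
  rw [signedIoo_of_ge (uIcc_of_le h ▸ hu).2, neg_neg]

theorem integral_eq_integral_Iio_add_singleton_add_Ioi {E : Type*} [NormedAddCommGroup E]
    [NormedSpace ℝ E] [CompleteSpace E] {μ : Measure ℝ} {f : ℝ → E} (hf : Integrable f μ) (y : ℝ) :
    ∫ x, f x ∂μ = ∫ x in Iio y, f x ∂μ + μ.real {y} • f y + ∫ x in Ioi y, f x ∂μ := by
  rw [← intervalIntegral.integral_Iio_add_Ici (b := y) hf.integrableOn hf.integrableOn,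
    ← Ioi_insert, insert_eq, setIntegral_union (by simp) measurableSet_Ioi hf.integrableOn
      hf.integrableOn, integral_singleton, add_assoc]

theorem integral_posPart_eq_q_add_q (m : Measure ℝ) [IsFiniteMeasureOnCompacts m]
    (y a : ℝ) (ha : 0 ≤ a) :
    ∫ u, max (a - |u - y|) 0 ∂m = qFun m y (y - a) + qFun m y (y + a) := by
  have hint : Integrable (fun u ↦ max (a - |u - y|) 0) m := by
    refine Continuous.integrable_of_hasCompactSupport (by fun_prop)
      (HasCompactSupport.intro (isCompact_Icc (a := y - a) (b := y + a)) fun u hu ↦ ?_)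
    refine max_eq_right (sub_nonpos.2 ?_)
    by_contra! h
    exact hu ⟨by linarith [(abs_lt.1 h).1], by linarith [(abs_lt.1 h).2]⟩
  have hleft : ∫ u in Iio y, max (a - |u - y|) 0 ∂m = ∫ u in Iio y, max (u - (y - a)) 0 ∂m :=
    setIntegral_congr_fun measurableSet_Iio fun u (hu : u < y) ↦ by
      rw [abs_of_neg (sub_neg.2 hu)]; congr 1; ring
  have hright : ∫ u in Ioi y, max (a - |u - y|) 0 ∂m = ∫ u in Ioi y, max (y + a - u) 0 ∂m :=
    setIntegral_congr_fun measurableSet_Ioi fun u (hu : y < u) ↦ by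
      rw [abs_of_pos (sub_pos.2 hu)]; congr 1; ring
  rw [integral_eq_integral_Iio_add_singleton_add_Ioi hint y, hleft, hright,
    qFun_of_ge m (by linarith : y - a ≤ y), qFun_of_le m (by linarith : y ≤ y + a),
    intervalIntegral_measure_Ioo_right m (by linarith),
    intervalIntegral_measure_Ioo_left m (by linarith), sub_self, abs_zero, sub_zero,
    max_eq_left ha, smul_eq_mul, measureReal_def]
  ring
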